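/- arXiv:1409.3868 — 2 statements merged into one kernel-verified Lean document; each statement's English description precedes it below -/
import Mathlib

section
/- For each j ∈ {1,…,n}, the vector polynomial q_j is a j-th generator of the interpolation set 𝕊 = 𝕊({σ_k}_{k=1}^N, {x_k}_{k=1}^N): q_j is a nonzero element of 𝕊 ∖ (𝕄(q_1)+⋯+𝕄(q_{j−1})) (of 𝕊 itself when j = 1) and its height is minimal among the nonzero elements of that set. -/
open Polynomial Matrix

/-- The height of an `n`-dimensional vector polynomial. -/
noncomputable def vheight (n : ℕ) (r : Fin n → Polynomial ℂ) : WithBot ℕ :=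
  Finset.univ.sup fun j : Fin n => n • (r j).degree + ((j : ℕ) : WithBot ℕ)

/-- The class `𝓜(n,N)` of band symmetric matrices with degeneration indices `m`. -/
structure MatrixClassM (n N : ℕ) (A : Matrix (Fin N) (Fin N) ℝ) (m : ℕ → ℕ) : Prop where
  symm : A.IsSymm
  band : ∀ k l : Fin N, (n : ℤ) < |(k : ℤ) - (l : ℤ)| → A k l = 0
  m_zero : m 0 = 0
  m_last : m n = N
  m_mono : ∀ j < n, m j < m (j + 1)
  m_one : 1 < m 1
  m_le : ∀ j, 1 ≤ j → j ≤ n → m j ≤ N - n + j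
  d_pos : ∀ j < n, ∀ k l : Fin N, (l : ℕ) = (k : ℕ) + (n - j) →
      m j < (k : ℕ) + 1 → (k : ℕ) + 1 < m (j + 1) → 0 < A l k
  d_zero : ∀ j < n, ∀ k l : Fin N, (l : ℕ) = (k : ℕ) + (n - j) →
      m (j + 1) ≤ (k : ℕ) + 1 → (k : ℕ) + 1 ≤ N - n + j → A l k = 0

/-- The rank-one jump matrix `σ_k`. -/
def sigmaJump {n N : ℕ} (αc : Fin N → Fin n → ℂ) (k : Fin N) :
    Matrix (Fin n) (Fin n) ℂ :=
  Matrix.of fun i j => (starRingEnd ℂ) (αc k i) * αc k j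

/-- The inner product `⟨r,s⟩_{L²(σ)}` for vector polynomials. -/
noncomputable def L2inner {n N : ℕ} (x : Fin N → ℝ)
    (σ : Fin N → Matrix (Fin n) (Fin n) ℂ) (r s : Fin n → Polynomial ℂ) : ℂ :=
  ∑ k, ∑ i, ∑ j,
    (starRingEnd ℂ) ((r i).eval ((x k : ℂ))) * σ k i j * (s j).eval ((x k : ℂ))

/-- The interpolation set `𝕊`. -/
def interpSet {n N : ℕ} (z : Fin N → ℂ) (α : Fin N → Fin n → ℂ) :
    Set (Fin n → Polynomial ℂ) :=
  {r | ∀ k, ∑ j, α k j * (r j).eval (z k) = 0}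

/-- `𝕄(r_1) + ⋯ + 𝕄(r_m)`. -/
def polySpan {n m : ℕ} (r : Fin m → Fin n → Polynomial ℂ) :
    Set (Fin n → Polynomial ℂ) :=
  {s | ∃ c : Fin m → Polynomial ℂ, s = fun jj => ∑ i, c i * r i jj}

/-- `𝕄(r_1) + ⋯ + 𝕄(r_{j-1})`. -/
def prevSpan {n : ℕ} (r : Fin n → Fin n → Polynomial ℂ) (j : Fin n) :
    Set (Fin n → Polynomial ℂ) :=
  {s | ∃ c : Fin n → Polynomial ℂ,
      s = fun jj => ∑ i ∈ Finset.univ.filter (fun i => i < j), c i * r i jj}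

/-- `r` is a sequence of generators of `S`. -/
def IsGenSeq {n : ℕ} (S : Set (Fin n → Polynomial ℂ))
    (r : Fin n → Fin n → Polynomial ℂ) : Prop :=
  ∀ j : Fin n, r j ≠ 0 ∧ r j ∈ S \ prevSpan r j ∧
    ∀ s ∈ S \ prevSpan r j, s ≠ 0 → vheight n (r j) ≤ vheight n s

/-!
Interleaving `r ↦ ∑ₜ Rₜ(Xⁿ) Xᵗ` turns the height of an `n`-vector polynomial into the degree of a
scalar polynomial, and multiplication by a scalar `S` into multiplication by `S(Xⁿ)`.

For `c ≥ n`, column `c` of the recursion is solved from the unique non-degenerate row `κ c` whose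
outermost band entry sits in column `c`, so the heights of the vectors `φ_c = (φ⁽ʲ⁾_c)ⱼ` satisfy
`h(c) = h(κ c) + n` and increase strictly with `c`; the same count gives `q_i` the height
`h(m_i - 1) + n`. No column has a degenerate pivot row, and following `κ` downwards this forces the
heights of the `q_i` into pairwise distinct residue classes mod `n`. Hence the heights of the `φ_c`
and of the `Xᵈ q_i` exhaust `ℕ`, so every vector polynomial is `∑ γ_c φ_c + ∑ S_i q_i`.

Pairing with `(αⱼ(x_k))ⱼ` sends `φ_c` to the `c`-th entry of the eigenvector `α(x_k)` and kills
every `q_i`, an entry of `(x_k − 𝒜) α(x_k)`; as the `α(x_k)` form a basis, `γ = 0` on `𝕊`.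
Finally, distinct residues mean that the heights of the `S_i q_i` never cancel: this gives
`q_j ∉ 𝕄(q_1) + ⋯ + 𝕄(q_{j−1})` and the minimality of the height of `q_j`.
-/

namespace Polynomial

section Interleave

/-- The coefficient of `X ^ (n * d + t)` in `interleave R n r` is that of `X ^ d` in `r t`. -/
noncomputable def interleave (R : Type*) [CommSemiring R] (n : ℕ) : (Fin n → R[X]) →ₗ[R] R[X] :=
  ∑ t : Fin n, LinearMap.mulRight R (X ^ (t : ℕ)) ∘ₗ (expand R n).toLinearMap ∘ₗ LinearMap.proj t

variable {R : Type*} [CommSemiring R] {n : ℕ}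

theorem interleave_apply (r : Fin n → R[X]) :
    interleave R n r = ∑ t, expand R n (r t) * X ^ (t : ℕ) := by
  simp [interleave]

theorem interleave_smul (S : R[X]) (r : Fin n → R[X]) :
    interleave R n (S • r) = expand R n S * interleave R n r := by
  simp [interleave_apply, Finset.mul_sum, mul_assoc]

end Interleave

theorem natDegree_X_pow_mod_injective {R : Type*} [Semiring R] [Nontrivial R] {n : ℕ} :
    Function.Injective fun t : Fin n => ((X : R[X]) ^ (t : ℕ)).natDegree % n := by
  intro t t' h
  simpa [Nat.mod_eq_of_lt t.isLt, Nat.mod_eq_of_lt t'.isLt, Fin.ext_iff] using h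

section Residues

variable {R ι : Type*} [CommRing R] [NoZeroDivisors R] {n : ℕ}

theorem natDegree_expand_mul (hn : 0 < n) {c g : R[X]} (hc : c ≠ 0) (hg : g ≠ 0) :
    (expand R n c * g).natDegree = n * c.natDegree + g.natDegree := by
  rw [natDegree_mul ((expand_ne_zero hn).mpr hc) hg, natDegree_expand, mul_comm]

theorem degree_sum_expand_mul (hn : 0 < n) (s : Finset ι) (c g : ι → R[X]) (hg : ∀ i, g i ≠ 0)
    (hres : Function.Injective fun i => (g i).natDegree % n) :
    (∑ i ∈ s, expand R n (c i) * g i).degree =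
      s.sup fun i => (expand R n (c i) * g i).degree := by
  refine degree_sum_eq_of_disjoint _ s fun i ⟨_, hi⟩ j ⟨_, hj⟩ hij hdeg => hij (hres ?_)
  have hci : c i ≠ 0 := by rintro h; simp [h] at hi
  have hcj : c j ≠ 0 := by rintro h; simp [h] at hj
  have h := natDegree_eq_natDegree hdeg
  simp only [natDegree_expand_mul hn hci (hg i), natDegree_expand_mul hn hcj (hg j)] at h
  simpa [Nat.mul_add_mod] using congrArg (· % n) h

theorem degree_expand_mul_le_degree_sum (hn : 0 < n) {s : Finset ι} (c g : ι → R[X])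
    (hg : ∀ i, g i ≠ 0) (hres : Function.Injective fun i => (g i).natDegree % n) {i : ι}
    (hi : i ∈ s) :
    (expand R n (c i) * g i).degree ≤ (∑ i ∈ s, expand R n (c i) * g i).degree := by
  rw [degree_sum_expand_mul hn s c g hg hres]
  exact Finset.le_sup (f := fun i => (expand R n (c i) * g i).degree) hi

theorem eq_zero_of_sum_expand_mul_eq_zero (hn : 0 < n) {s : Finset ι} (c g : ι → R[X])
    (hg : ∀ i, g i ≠ 0) (hres : Function.Injective fun i => (g i).natDegree % n)
    (h : ∑ i ∈ s, expand R n (c i) * g i = 0) {i : ι} (hi : i ∈ s) : c i = 0 := by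
  have := degree_expand_mul_le_degree_sum hn c g hg hres hi
  rw [h, degree_zero, le_bot_iff, degree_eq_bot, mul_eq_zero, expand_eq_zero hn] at this
  exact this.resolve_right (hg i)

theorem interleave_injective [Nontrivial R] (hn : 0 < n) :
    Function.Injective (interleave R n) := by
  refine (injective_iff_map_eq_zero _).mpr fun r hr => ?_
  ext1 t
  rw [interleave_apply] at hr
  exact eq_zero_of_sum_expand_mul_eq_zero hn r _ (fun _ => pow_ne_zero _ X_ne_zero)
    natDegree_X_pow_mod_injective hr (Finset.mem_univ t)

end Residues

theorem degree_sum_C_mul_lt {R ι : Type*} [Semiring R] [NoZeroDivisors R] (s : Finset ι)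
    (a : ι → R) (f : ι → R[X]) {D : ℕ} (h : ∀ l ∈ s, a l ≠ 0 → (f l).degree < D) :
    (∑ l ∈ s, C (a l) * f l).degree < D := by
  refine (degree_sum_le _ _).trans_lt
    ((Finset.sup_lt_iff (WithBot.bot_lt_coe D)).mpr fun l hl => ?_)
  by_cases ha : a l = 0
  · simp [ha]
  · rw [degree_C_mul ha]
    exact h l hl ha

theorem degree_interleave_C {K : Type*} [Field K] {n : ℕ} (hn : 0 < n) {a : Fin n → K}
    {j : Fin n} (ha : ∀ t, j < t → a t = 0) (hj : a j ≠ 0) :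
    (interleave K n fun t => C (a t)).degree = (j : ℕ) := by
  rw [interleave_apply, degree_sum_expand_mul hn _ _ _ (fun _ => pow_ne_zero _ X_ne_zero)
    natDegree_X_pow_mod_injective]
  apply le_antisymm
  · refine Finset.sup_le fun t _ => ?_
    rw [expand_C]
    by_cases h : j < t
    · simp [ha t h]
    · exact (degree_C_mul_X_pow_le _ _).trans (by exact_mod_cast not_lt.mp h)
  · refine le_trans ?_ (Finset.le_sup (f := fun t => (expand K n (C (a t)) * X ^ (t : ℕ)).degree)
      (Finset.mem_univ j))
    rw [expand_C, degree_C_mul_X_pow _ hj]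

theorem surjective_of_forall_exists_degree_eq {K M : Type*} [Field K] [AddCommGroup M]
    [Module K M] (f : M →ₗ[K] K[X]) (hf : ∀ D : ℕ, ∃ x, (f x).degree = D) :
    Function.Surjective f := by
  choose x hx using hf
  let S : Sequence K := ⟨fun D => f (x D), hx⟩
  have hspan := S.span fun D => (leadingCoeff_ne_zero.mpr (S.ne_zero D)).isUnit
  rw [← LinearMap.range_eq_top, eq_top_iff, ← hspan, Submodule.span_le]
  rintro _ ⟨D, rfl⟩
  exact ⟨x D, rfl⟩

end Polynomial

theorem vheight_eq_degree_interleave {n : ℕ} (hn : 0 < n) (r : Fin n → ℂ[X]) :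
    vheight n r = (interleave ℂ n r).degree := by
  rw [interleave_apply, degree_sum_expand_mul hn _ r _ (fun _ => pow_ne_zero _ X_ne_zero)
    natDegree_X_pow_mod_injective, vheight]
  refine Finset.sup_congr rfl fun t _ => ?_
  by_cases ht : r t = 0
  · simp [ht, hn.ne']
  · rw [degree_mul, degree_X_pow, degree_eq_natDegree ((expand_ne_zero hn).mpr ht),
      degree_eq_natDegree ht, natDegree_expand]
    simp [mul_comm]

theorem exists_eq_sum_smul_add_sum_smul {K : Type*} [Field K] {n N n' : ℕ} (hn : 0 < n)
    (ψ : Fin N → Fin n → K[X]) (q : Fin n' → Fin n → K[X]) {a : Fin N → ℕ} {b : Fin n' → ℕ}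
    (hψ : ∀ c, (interleave K n (ψ c)).degree = a c)
    (hq : ∀ i, (interleave K n (q i)).degree = b i)
    (hcover : ∀ D : ℕ, (∃ c, a c = D) ∨ ∃ i d, n * d + b i = D) (r : Fin n → K[X]) :
    ∃ (γ : Fin N → K) (S : Fin n' → K[X]), r = ∑ c, γ c • ψ c + ∑ i, S i • q i := by
  classical
  let L := (Fintype.linearCombination K ψ).coprod
    ((Fintype.linearCombination K[X] q).restrictScalars K)
  have hsurj : Function.Surjective (interleave K n ∘ₗ L) := by
    refine surjective_of_forall_exists_degree_eq _ fun D => ?_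
    rcases hcover D with ⟨c, rfl⟩ | ⟨i, d, rfl⟩
    · exact ⟨(Pi.single c 1, 0), by simp [L, hψ]⟩
    · refine ⟨(0, Pi.single i (X ^ d)), ?_⟩
      simp [L, interleave_smul, degree_mul, hq, ← pow_mul]
  obtain ⟨x, hx⟩ := hsurj (interleave K n r)
  exact ⟨x.1, x.2, (interleave_injective hn hx).symm⟩

theorem mem_prevSpan_iff {n : ℕ} {r : Fin n → Fin n → ℂ[X]} {j : Fin n} {s : Fin n → ℂ[X]} :
    s ∈ prevSpan r j ↔ ∃ c : Fin n → ℂ[X], (∀ i, j ≤ i → c i = 0) ∧ s = ∑ i, c i • r i := by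
  constructor
  · rintro ⟨c, rfl⟩
    refine ⟨fun i => if i < j then c i else 0, fun i hi => if_neg (not_lt.mpr hi), ?_⟩
    ext1 t
    simp [Finset.sum_apply, Finset.sum_filter, ite_apply]
  · rintro ⟨c, hc, rfl⟩
    refine ⟨c, ?_⟩
    ext1 t
    rw [Finset.sum_apply, Finset.sum_filter]
    refine Finset.sum_congr rfl fun i _ => ?_
    split_ifs with h
    · rfl
    · simp [hc i (not_lt.mp h)]

theorem isGenSeq_of_degree_interleave {n : ℕ} (hn : 0 < n) {S : Set (Fin n → ℂ[X])}
    {q : Fin n → Fin n → ℂ[X]} {b : Fin n → ℕ} (hq : ∀ i, (interleave ℂ n (q i)).degree = b i)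
    (hmono : Monotone b) (hres : Function.Injective fun i => b i % n) (hmem : ∀ i, q i ∈ S)
    (hspan : ∀ s ∈ S, ∃ c : Fin n → ℂ[X], s = ∑ i, c i • q i) : IsGenSeq S q := by
  have hq0 : ∀ i, interleave ℂ n (q i) ≠ 0 := fun i h => by
    simpa [h] using hq i
  have hres' : Function.Injective fun i => (interleave ℂ n (q i)).natDegree % n := by
    simpa only [natDegree_eq_of_degree_eq_some (hq _)] using hres
  have hsum : ∀ c : Fin n → ℂ[X],
      interleave ℂ n (∑ i, c i • q i) = ∑ i, expand ℂ n (c i) * interleave ℂ n (q i) := by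
    simp [interleave_smul]
  intro j
  refine ⟨fun h => hq0 j (by rw [h, map_zero]), ⟨hmem j, ?_⟩, ?_⟩
  · rw [mem_prevSpan_iff]
    rintro ⟨c, hc, hqj⟩
    set g : Fin n → ℂ[X] := Pi.single j 1 - c
    have hzero : ∑ i, g i • q i = 0 := by
      simp [g, sub_smul, Finset.sum_sub_distrib, ← hqj]
    have := eq_zero_of_sum_expand_mul_eq_zero hn g _ hq0 hres'
      (by rw [← hsum, hzero, map_zero]) (Finset.mem_univ j)
    simp [g, hc j le_rfl] at this
  · rintro s ⟨hsS, hsprev⟩ -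
    obtain ⟨c, rfl⟩ := hspan s hsS
    obtain ⟨i, hji, hci⟩ : ∃ i, j ≤ i ∧ c i ≠ 0 := by
      by_contra! h
      exact hsprev (mem_prevSpan_iff.mpr ⟨c, h, rfl⟩)
    rw [vheight_eq_degree_interleave hn, vheight_eq_degree_interleave hn, hsum, hq j]
    calc ((b j : ℕ) : WithBot ℕ) ≤ ((b i : ℕ) : WithBot ℕ) := WithBot.coe_le_coe.mpr (hmono hji)
      _ = (interleave ℂ n (q i)).degree := (hq i).symm
      _ ≤ (interleave ℂ n (q i) * expand ℂ n (c i)).degree :=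
        degree_le_mul_left _ ((expand_ne_zero hn).mpr hci)
      _ = (expand ℂ n (c i) * interleave ℂ n (q i)).degree := by rw [mul_comm]
      _ ≤ (∑ i, expand ℂ n (c i) * interleave ℂ n (q i)).degree :=
        degree_expand_mul_le_degree_sum hn c _ hq0 hres' (Finset.mem_univ i)

namespace MatrixClassM

/-- For `n ≤ c < N`, column `c` holds the outermost nonzero band entry of exactly one row,
`pivotRow n m c`. That row lies in the block `j = pivotBlock n m c` of (0-based) rows
`m j ≤ k < m (j + 1) - 1`, whose entries reach `n - j` places beyond the diagonal. -/
def pivotBlock (n : ℕ) (m : ℕ → ℕ) (c : ℕ) : ℕ :=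
  Nat.findGreatest (fun j => m j + (n - j) ≤ c) (n - 1)

def pivotRow (n : ℕ) (m : ℕ → ℕ) (c : ℕ) : ℕ :=
  c - (n - pivotBlock n m c)

variable {n N : ℕ} {A : Matrix (Fin N) (Fin N) ℝ} {m : ℕ → ℕ} {c c' : ℕ}

theorem pivotBlock_lt (hn : 0 < n) : pivotBlock n m c < n :=
  Nat.lt_of_le_of_lt (Nat.findGreatest_le _) (Nat.sub_lt hn one_pos)

theorem pivotBlock_mono : Monotone (pivotBlock n m) :=
  fun _ _ hcc' => Nat.findGreatest_mono_left (fun _ h => h.trans hcc') _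

theorem pivotRow_lt (hn : 0 < n) (hc : n ≤ c) : pivotRow n m c < c := by
  have := pivotBlock_lt (m := m) (c := c) hn
  unfold pivotRow; omega

theorem pivotRow_lt_pivotRow (hc : n ≤ c) (hcc' : c < c') : pivotRow n m c < pivotRow n m c' := by
  have := pivotBlock_mono (n := n) (m := m) hcc'.le
  unfold pivotRow; omega

/-- The height of the vector `(φ⁽ʲ⁾_c)ⱼ` of `c`-th entries. -/
def colHeight (n : ℕ) (m : ℕ → ℕ) (c : ℕ) : ℕ :=
  if 0 < n ∧ n ≤ c then colHeight n m (pivotRow n m c) + n else c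
termination_by c
decreasing_by exact pivotRow_lt ‹0 < n ∧ n ≤ c›.1 ‹0 < n ∧ n ≤ c›.2

theorem colHeight_of_lt (hc : c < n) : colHeight n m c = c := by
  rw [colHeight, if_neg (by omega)]

theorem colHeight_of_le (hn : 0 < n) (hc : n ≤ c) :
    colHeight n m c = colHeight n m (pivotRow n m c) + n := by
  rw [colHeight, if_pos ⟨hn, hc⟩]

theorem colHeight_strictMono (hn : 0 < n) : StrictMono (colHeight n m) := by
  intro c c' hcc'
  induction c' using Nat.strong_induction_on generalizing c with
  | _ c' ih =>
    by_cases hc' : c' < n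
    · rwa [colHeight_of_lt hc', colHeight_of_lt (hcc'.trans hc')]
    rw [colHeight_of_le hn (not_lt.mp hc')]
    by_cases hc : c < n
    · rw [colHeight_of_lt hc]; omega
    rw [colHeight_of_le hn (not_lt.mp hc)]
    have := ih _ (pivotRow_lt (m := m) hn (not_lt.mp hc'))
      (pivotRow_lt_pivotRow (not_lt.mp hc) hcc')
    omega

theorem exists_colHeight_eq_of_modEq (hn : 0 < n) {v : ℕ} (hmod : v ≡ colHeight n m c' [MOD n])
    (hle : v ≤ colHeight n m c') : ∃ c ≤ c', colHeight n m c = v := by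
  induction c' using Nat.strong_induction_on with
  | _ c' ih =>
    rcases hle.eq_or_lt with rfl | hlt
    · exact ⟨c', le_rfl, rfl⟩
    by_cases hc' : c' < n
    · rw [colHeight_of_lt hc'] at hmod hlt
      have := hmod.add_le_of_lt hlt
      omega
    rw [colHeight_of_le hn (not_lt.mp hc')] at hmod hlt
    have hk := pivotRow_lt (m := m) hn (not_lt.mp hc')
    have hmod' := hmod.trans Nat.add_modEq_right
    obtain ⟨c, hc, hcv⟩ := ih _ hk hmod' (hmod'.le_of_lt_add hlt)
    exact ⟨c, hc.trans hk.le, hcv⟩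

theorem exists_pivotRow_eq_of_modEq (hn : 0 < n) (hcc' : c < c')
    (hmod : colHeight n m c ≡ colHeight n m c' [MOD n]) :
    ∃ c'', n ≤ c'' ∧ c'' ≤ c' ∧ pivotRow n m c'' = c := by
  induction c' using Nat.strong_induction_on with
  | _ c' ih =>
    have hlt := colHeight_strictMono (m := m) hn hcc'
    by_cases hc' : c' < n
    · rw [colHeight_of_lt hc', colHeight_of_lt (hcc'.trans hc')] at hmod hlt
      have := hmod.add_le_of_lt hlt
      omega
    have hc'n := not_lt.mp hc'
    have hk := pivotRow_lt (m := m) hn hc'n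
    rw [colHeight_of_le hn hc'n] at hmod hlt
    have hmod' := hmod.trans Nat.add_modEq_right
    rcases lt_trichotomy (pivotRow n m c') c with h | h | h
    · have := hmod'.symm.add_le_of_lt (colHeight_strictMono hn h)
      omega
    · exact ⟨c', hc'n, le_rfl, h⟩
    · obtain ⟨c'', h1, h2, h3⟩ := ih _ hk h hmod'
      exact ⟨c'', h1, h2.trans hk.le, h3⟩

/-- The paper's (1-based) row `m_{i+1}`, where `q_{i+1}` is read off, as a 0-based index. -/
def degenerateRow (m : ℕ → ℕ) (i : ℕ) : ℕ := m (i + 1) - 1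

theorem m_add_le (hA : MatrixClassM n N A m) {a b : ℕ} (hab : a ≤ b) (hb : b ≤ n) :
    m a + (b - a) ≤ m b := by
  induction b with
  | zero =>
    obtain rfl : a = 0 := by omega
    simp
  | succ b ih =>
    rcases hab.eq_or_lt with rfl | hab
    · simp
    · have := ih (by omega) (by omega)
      have := hA.m_mono b (by omega)
      omega

theorem pivotBlock_spec (hA : MatrixClassM n N A m) (hc : n ≤ c) :
    m (pivotBlock n m c) + (n - pivotBlock n m c) ≤ c :=
  Nat.findGreatest_spec (P := fun j => m j + (n - j) ≤ c) (Nat.zero_le _) (by rw [hA.m_zero]; omega)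

theorem lt_pivotBlock_succ (hA : MatrixClassM n N A m) (hn : 0 < n) (hcN : c < N) :
    c < m (pivotBlock n m c + 1) + (n - (pivotBlock n m c + 1)) := by
  by_cases h : pivotBlock n m c + 1 ≤ n - 1
  · exact not_le.mp (Nat.findGreatest_is_greatest (P := fun j => m j + (n - j) ≤ c)
      (Nat.lt_succ_self _) h)
  · have : pivotBlock n m c + 1 = n := by have := pivotBlock_lt (m := m) (c := c) hn; omega
    rw [this, hA.m_last]
    omega

theorem m_pivotBlock_le_pivotRow (hA : MatrixClassM n N A m) (hc : n ≤ c) :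
    m (pivotBlock n m c) ≤ pivotRow n m c := by
  have := hA.pivotBlock_spec hc
  unfold pivotRow; omega

theorem pivotRow_succ_lt (hA : MatrixClassM n N A m) (hn : 0 < n) (hc : n ≤ c) (hcN : c < N) :
    pivotRow n m c + 1 < m (pivotBlock n m c + 1) := by
  have := hA.lt_pivotBlock_succ hn hcN
  have := pivotBlock_lt (m := m) (c := c) hn
  unfold pivotRow; omega

theorem pivotRow_ne_degenerate (hA : MatrixClassM n N A m) (hn : 0 < n) (hc : n ≤ c)
    (hcN : c < N) {i : ℕ} (hi : i ≤ n) : m i ≠ pivotRow n m c + 1 := by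
  have hj := pivotBlock_lt (m := m) (c := c) hn
  by_cases hij : i ≤ pivotBlock n m c
  · have := hA.m_add_le hij hj.le
    have := hA.m_pivotBlock_le_pivotRow hc
    omega
  · have := hA.m_add_le (show pivotBlock n m c + 1 ≤ i by omega) hi
    have := hA.pivotRow_succ_lt hn hc hcN
    omega

theorem apply_eq_zero_of_lt (hA : MatrixClassM n N A m) {j : ℕ} (hj : j ≤ n) {k l : Fin N}
    (hk : m j ≤ k + 1) (hl : (k : ℕ) + (n - j) < l) : A k l = 0 := by
  induction j with
  | zero =>
    refine hA.band k l (lt_abs.mpr (Or.inr ?_))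
    omega
  | succ j ih =>
    by_cases hlk : (l : ℕ) = k + (n - j)
    · rw [hA.symm.apply]
      exact hA.d_zero j (by omega) k l hlk hk (by omega)
    · exact ih (by omega) (by have := hA.m_mono j (by omega); omega) (by omega)

theorem pivot_ne_zero (hA : MatrixClassM n N A m) (hn : 0 < n) (hc : n ≤ c) (hcN : c < N) :
    A ⟨pivotRow n m c, (pivotRow_lt hn hc).trans hcN⟩ ⟨c, hcN⟩ ≠ 0 := by
  rw [hA.symm.apply]
  refine (hA.d_pos _ (pivotBlock_lt hn) _ _ ?_ ?_ (hA.pivotRow_succ_lt hn hc hcN)).ne'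
  · have := hA.pivotBlock_spec hc
    simp only [pivotRow]; omega
  · exact Nat.lt_succ_of_le (hA.m_pivotBlock_le_pivotRow hc)

theorem pivotRow_apply_eq_zero (hA : MatrixClassM n N A m) (hn : 0 < n) (hc : n ≤ c)
    (hcN : c < N) {l : Fin N} (hl : c < l) :
    A ⟨pivotRow n m c, (pivotRow_lt hn hc).trans hcN⟩ l = 0 := by
  refine hA.apply_eq_zero_of_lt (pivotBlock_lt hn).le
    (Nat.le_succ_of_le (hA.m_pivotBlock_le_pivotRow hc)) ?_
  have := hA.pivotBlock_spec hc
  simp only [pivotRow]; omega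

theorem succ_degenerateRow (hA : MatrixClassM n N A m) {i : ℕ} (hi : i < n) :
    degenerateRow m i + 1 = m (i + 1) := by
  have := hA.m_add_le (Nat.zero_le (i + 1)) hi
  rw [hA.m_zero] at this
  unfold degenerateRow; omega

theorem degenerateRow_lt (hA : MatrixClassM n N A m) {i : ℕ} (hi : i < n) :
    degenerateRow m i < N := by
  have hle := hA.m_add_le (b := n) (a := i + 1) hi le_rfl
  rw [hA.m_last] at hle
  have := hA.succ_degenerateRow hi
  omega

theorem degenerateRow_lt_degenerateRow (hA : MatrixClassM n N A m) {i i' : ℕ} (hii' : i < i')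
    (hi' : i' < n) : degenerateRow m i < degenerateRow m i' := by
  have := hA.m_add_le (a := i + 1) (b := i' + 1) (by omega) hi'
  have := hA.succ_degenerateRow (hii'.trans hi')
  have := hA.succ_degenerateRow hi'
  omega

theorem degenerateRow_mono (hA : MatrixClassM n N A m) {i i' : ℕ} (hii' : i ≤ i')
    (hi' : i' < n) : degenerateRow m i ≤ degenerateRow m i' := by
  rcases hii'.eq_or_lt with rfl | h
  exacts [le_rfl, (hA.degenerateRow_lt_degenerateRow h hi').le]

theorem degenerateRow_apply_eq_zero (hA : MatrixClassM n N A m) {i : ℕ} (hi : i < n)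
    {k l : Fin N} (hk : (k : ℕ) = degenerateRow m i) (hl : (k : ℕ) + (n - (i + 1)) < l) :
    A k l = 0 :=
  hA.apply_eq_zero_of_lt hi (by rw [hk, hA.succ_degenerateRow hi]) hl

theorem colHeight_lt_colHeight_degenerateRow (hA : MatrixClassM n N A m) (hn : 0 < n) {i : ℕ}
    (hi : i < n) : colHeight n m (degenerateRow m i + (n - (i + 1))) <
      colHeight n m (degenerateRow m i) + n := by
  set c := degenerateRow m i + (n - (i + 1)) with hc_def
  by_cases hc : c < n
  · rw [colHeight_of_lt hc]; omega
  rw [colHeight_of_le hn (not_lt.mp hc), add_lt_add_iff_right]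
  refine colHeight_strictMono hn ?_
  have hj := pivotBlock_lt (m := m) (c := c) hn
  have hji : pivotBlock n m c ≤ i := by
    by_contra! h
    have := hA.pivotBlock_spec (c := c) (not_lt.mp hc)
    have := hA.m_add_le (a := i + 1) (b := pivotBlock n m c) h hj.le
    have := hA.succ_degenerateRow hi
    omega
  unfold pivotRow
  omega

theorem colHeight_degenerateRow_mod_injective (hA : MatrixClassM n N A m) (hn : 0 < n) :
    Function.Injective fun i : Fin n => colHeight n m (degenerateRow m i) % n := by
  suffices h : ∀ i i' : Fin n, i < i' →
      ¬ colHeight n m (degenerateRow m i) ≡ colHeight n m (degenerateRow m i') [MOD n] by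
    intro i i' hii'
    by_contra hne
    rcases lt_or_gt_of_ne hne with hlt | hlt
    · exact h i i' hlt hii'
    · exact h i' i hlt hii'.symm
  intro i i' hii' hmod
  obtain ⟨c, hnc, hc, hpiv⟩ := exists_pivotRow_eq_of_modEq hn
    (hA.degenerateRow_lt_degenerateRow hii' i'.isLt) hmod
  refine hA.pivotRow_ne_degenerate hn hnc (hc.trans_lt (hA.degenerateRow_lt i'.isLt)) i.isLt ?_
  rw [hpiv, hA.succ_degenerateRow i.isLt]

theorem exists_colHeight_eq_or_degenerate (hA : MatrixClassM n N A m) (hn : 0 < n) (D : ℕ) :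
    (∃ c < N, colHeight n m c = D) ∨
      ∃ i : Fin n, ∃ d, n * d + (colHeight n m (degenerateRow m i) + n) = D := by
  let res : Fin n → Fin n := fun i => ⟨colHeight n m (degenerateRow m i) % n, Nat.mod_lt _ hn⟩
  have hres : Function.Injective res :=
    fun i i' h => hA.colHeight_degenerateRow_mod_injective hn (Fin.val_eq_of_eq h)
  obtain ⟨i, hi⟩ := Finite.injective_iff_surjective.mp hres ⟨D % n, Nat.mod_lt _ hn⟩
  have hmod : D ≡ colHeight n m (degenerateRow m i) [MOD n] := (Fin.val_eq_of_eq hi).symm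
  by_cases hle : D ≤ colHeight n m (degenerateRow m i)
  · obtain ⟨c, hc, hcD⟩ := exists_colHeight_eq_of_modEq hn hmod hle
    exact .inl ⟨c, hc.trans_lt (hA.degenerateRow_lt i.isLt), hcD⟩
  · have hle' := hmod.symm.add_le_of_lt (not_le.mp hle)
    obtain ⟨d, hd⟩ := (Nat.modEq_iff_dvd' hle').mp (Nat.add_modEq_right.trans hmod.symm)
    exact .inr ⟨i, d, by omega⟩

end MatrixClassM

section RowResidual

variable {n N : ℕ}

/-- The `k`-th entry of `(zI − 𝒜) φ⁽ʲ⁾(z)`, for all `j` at once. -/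
noncomputable def rowResidual (A : Matrix (Fin N) (Fin N) ℝ) (φ : Fin n → Fin N → ℂ[X])
    (k : Fin N) : Fin n → ℂ[X] :=
  fun t => X * φ t k - ∑ l, C (A k l : ℂ) * φ t l

theorem rowResidual_eq (A : Matrix (Fin N) (Fin N) ℝ) (φ : Fin n → Fin N → ℂ[X]) (k : Fin N) :
    rowResidual A φ k = (X : ℂ[X]) • (fun t => φ t k) - ∑ l, C (A k l : ℂ) • fun t => φ t l := by
  ext1 t
  simp [rowResidual, Finset.sum_apply]

theorem interleave_rowResidual (A : Matrix (Fin N) (Fin N) ℝ) (φ : Fin n → Fin N → ℂ[X])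
    (k : Fin N) : interleave ℂ n (rowResidual A φ k) = X ^ n * interleave ℂ n (fun t => φ t k) -
      ∑ l, C (A k l : ℂ) * interleave ℂ n fun t => φ t l := by
  simp [rowResidual_eq, interleave_smul]

end RowResidual

namespace MatrixClassM

variable {n N : ℕ} {A : Matrix (Fin N) (Fin N) ℝ} {m : ℕ → ℕ}

theorem degree_eq_colHeight (hA : MatrixClassM n N A m) (hn : 0 < n) {P : Fin N → ℂ[X]}
    (hinit : ∀ c : Fin N, (c : ℕ) < n → (P c).degree = c)
    (hrec : ∀ k : Fin N, (∀ i, 1 ≤ i → i ≤ n → m i ≠ k + 1) →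
      X ^ n * P k - ∑ l, C (A k l : ℂ) * P l = 0) (c : Fin N) :
    (P c).degree = colHeight n m c := by
  obtain ⟨c, hcN⟩ := c
  induction c using Nat.strong_induction_on with
  | _ c ih =>
  by_cases hc : c < n
  · rw [hinit _ hc, colHeight_of_lt hc]
    rfl
  replace hc := not_lt.mp hc
  set k : Fin N := ⟨pivotRow n m c, (pivotRow_lt hn hc).trans hcN⟩
  have hsplit : C (A k ⟨c, hcN⟩ : ℂ) * P ⟨c, hcN⟩ =
      X ^ n * P k - ∑ l ∈ Finset.Iio ⟨c, hcN⟩, C (A k l : ℂ) * P l := by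
    have hzero : ∀ l ∈ Finset.univ, l ∉ Finset.Iic ⟨c, hcN⟩ → C (A k l : ℂ) * P l = 0 :=
      fun l _ hl => by
        rw [hA.pivotRow_apply_eq_zero hn hc hcN (Fin.lt_def.mp (not_le.mp (by simpa using hl)))]
        simp
    rw [sub_eq_zero.mp (hrec k fun _ _ => hA.pivotRow_ne_degenerate hn hc hcN),
      ← Finset.sum_subset (Finset.subset_univ _) hzero, ← Finset.Iio_insert,
      Finset.sum_insert Finset.notMem_Iio_self, add_sub_cancel_right]
  have hlow : (∑ l ∈ Finset.Iio ⟨c, hcN⟩, C (A k l : ℂ) * P l).degree < colHeight n m c := by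
    refine degree_sum_C_mul_lt _ _ _ fun l hl _ => ?_
    have hlc : (l : ℕ) < c := Fin.lt_def.mp (Finset.mem_Iio.mp hl)
    rw [ih l hlc l.isLt]
    exact_mod_cast colHeight_strictMono hn hlc
  have hlead : (X ^ n * P k).degree = ((colHeight n m c : ℕ) : WithBot ℕ) := by
    rw [degree_mul, degree_X_pow, ih _ (pivotRow_lt hn hc) _, colHeight_of_le hn hc, add_comm]
    norm_cast
  rw [← degree_C_mul (Complex.ofReal_ne_zero.mpr (hA.pivot_ne_zero hn hc hcN)), hsplit,
    degree_sub_eq_left_of_degree_lt (hlead ▸ hlow), hlead]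

theorem degree_interleave_column (hA : MatrixClassM n N A m) (hn : 0 < n) (hnN : n < N)
    {T : Matrix (Fin n) (Fin n) ℝ} (hT_upper : ∀ i j : Fin n, j < i → T i j = 0)
    (hT_diag : ∀ j : Fin n, T j j ≠ 0) {φ : Fin n → Fin N → ℂ[X]}
    (hφ_init : ∀ j i : Fin n, φ j (Fin.castLE hnN.le i) = C (T j i : ℂ))
    (hφ_rec : ∀ (j : Fin n) (k : Fin N), (∀ i, 1 ≤ i → i ≤ n → m i ≠ (k : ℕ) + 1) →
      ∑ l, C (A k l : ℂ) * φ j l = X * φ j k) (c : Fin N) :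
    (interleave ℂ n fun t => φ t c).degree = colHeight n m c := by
  refine hA.degree_eq_colHeight (P := fun c => interleave ℂ n fun t => φ t c) hn
    (fun c hc => ?_) (fun k hk => ?_) c
  · have hφc : ∀ t, φ t c = C (T t ⟨c, hc⟩ : ℂ) := fun t => hφ_init t ⟨c, hc⟩
    simp only [hφc]
    exact degree_interleave_C (a := fun t => (T t ⟨c, hc⟩ : ℂ)) hn
      (fun t ht => by rw [hT_upper t _ ht, Complex.ofReal_zero])
      (Complex.ofReal_ne_zero.mpr (hT_diag _))
  · rw [← interleave_rowResidual, show rowResidual A φ k = 0 from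
      funext fun t => sub_eq_zero.mpr (hφ_rec t k hk).symm, map_zero]

theorem degree_interleave_rowResidual (hA : MatrixClassM n N A m) (hn : 0 < n)
    {φ : Fin n → Fin N → ℂ[X]}
    (hφ : ∀ c : Fin N, (interleave ℂ n fun t => φ t c).degree = colHeight n m c) {i : ℕ}
    (hi : i < n) {k : Fin N} (hk : (k : ℕ) = degenerateRow m i) :
    (interleave ℂ n (rowResidual A φ k)).degree = ((colHeight n m k + n : ℕ) : WithBot ℕ) := by
  rw [interleave_rowResidual]
  have hlead : (X ^ n * interleave ℂ n fun t => φ t k).degree =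
      ((colHeight n m k + n : ℕ) : WithBot ℕ) := by
    rw [degree_mul, degree_X_pow, hφ, add_comm]
    norm_cast
  refine hlead ▸ degree_sub_eq_left_of_degree_lt
    (hlead ▸ degree_sum_C_mul_lt _ _ _ fun l _ hl => ?_)
  have hlk : (l : ℕ) ≤ k + (n - (i + 1)) := by
    by_contra! h
    exact hl (by exact_mod_cast hA.degenerateRow_apply_eq_zero hi hk h)
  rw [hφ]
  exact_mod_cast ((colHeight_strictMono hn).monotone hlk).trans_lt
    (hk ▸ hA.colHeight_lt_colHeight_degenerateRow hn hi)

end MatrixClassM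

section Interpolation

variable {n N : ℕ}

noncomputable def interpFunctional (z : ℂ) (α : Fin n → ℂ) : (Fin n → ℂ[X]) →ₗ[ℂ] ℂ :=
  ∑ t, α t • (leval z ∘ₗ LinearMap.proj (R := ℂ) (φ := fun _ : Fin n => ℂ[X]) t)

theorem interpFunctional_apply (z : ℂ) (α : Fin n → ℂ) (r : Fin n → ℂ[X]) :
    interpFunctional z α r = ∑ t, α t * (r t).eval z := by
  simp [interpFunctional]

theorem mem_interpSet_iff {z : Fin N → ℂ} {α : Fin N → Fin n → ℂ} {r : Fin n → ℂ[X]} :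
    r ∈ interpSet z α ↔ ∀ k, interpFunctional (z k) (α k) r = 0 := by
  simp [interpSet, interpFunctional_apply]

theorem interpFunctional_smul (z : ℂ) (α : Fin n → ℂ) (S : ℂ[X]) (r : Fin n → ℂ[X]) :
    interpFunctional z α (S • r) = S.eval z * interpFunctional z α r := by
  simp only [interpFunctional_apply, Pi.smul_apply, smul_eq_mul, eval_mul, Finset.mul_sum]
  exact Finset.sum_congr rfl fun t _ => mul_left_comm _ _ _

theorem interpFunctional_rowResidual {A : Matrix (Fin N) (Fin N) ℝ}
    {φ : Fin n → Fin N → ℂ[X]} {x : ℝ} {v : Fin N → ℂ} {α : Fin n → ℂ}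
    (heig : (A.map (fun a => (a : ℂ))) *ᵥ v = (x : ℂ) • v)
    (hα : ∀ i, v i = interpFunctional x α fun t => φ t i) (k : Fin N) :
    interpFunctional x α (rowResidual A φ k) = 0 := by
  have hk := congrFun heig k
  simp only [mulVec, dotProduct, Matrix.map_apply, Pi.smul_apply, smul_eq_mul] at hk
  simp only [rowResidual_eq, map_sub, map_sum, interpFunctional_smul, eval_X, eval_C, ← hα, hk,
    sub_self]

theorem eq_zero_of_orthonormal {v : Fin N → Fin N → ℂ}
    (horm : ∀ k l : Fin N, ∑ i, (starRingEnd ℂ) (v k i) * v l i = if k = l then 1 else 0)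
    {γ : Fin N → ℂ} (hγ : ∀ k, ∑ c, v k c * γ c = 0) : γ = 0 := by
  set V : Matrix (Fin N) (Fin N) ℂ := Matrix.of v
  have hV : V * Vᴴ = 1 := by
    ext k l
    simpa [V, Matrix.mul_apply, Matrix.one_apply, mul_comm, eq_comm] using horm l k
  calc γ = (Vᴴ * V) *ᵥ γ := by rw [mul_eq_one_comm.mp hV, one_mulVec]
    _ = 0 := by rw [← mulVec_mulVec, show V *ᵥ γ = 0 from funext hγ, mulVec_zero]

end Interpolation

open MatrixClassM

/-- For each j, the vector polynomial q_j is a j-th generator of 𝕊({σ_k},{x_k}). -/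
theorem stmt14
    (n N : ℕ) (hn : 0 < n) (hnN : n < N)
    (A : Matrix (Fin N) (Fin N) ℝ) (m : ℕ → ℕ)
    (hA : MatrixClassM n N A m)
    (T : Matrix (Fin n) (Fin n) ℝ)
    (hT_upper : ∀ i j : Fin n, j < i → T i j = 0)
    (hT_diag : ∀ j : Fin n, T j j ≠ 0)
    (φ : Fin n → Fin N → Polynomial ℂ)
    (hφ_init : ∀ (j : Fin n) (i : Fin n),
      φ j (Fin.castLE (le_of_lt hnN) i) = C ((T j i : ℂ)))
    (hφ_rec : ∀ (j : Fin n) (k : Fin N),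
      (∀ i, 1 ≤ i → i ≤ n → m i ≠ (k : ℕ) + 1) →
      ∑ l, C ((A k l : ℂ)) * φ j l = X * φ j k)
    (Q : Fin n → Fin n → Polynomial ℂ)
    (hQ : ∀ (j i : Fin n) (k : Fin N), (k : ℕ) + 1 = m ((i : ℕ) + 1) →
      Q j i = X * φ j k - ∑ l, C ((A k l : ℂ)) * φ j l)
    (x : Fin N → ℝ) (v : Fin N → Fin N → ℂ)
    (heig : ∀ k, (A.map (fun a => (a : ℂ))).mulVec (v k) = (x k : ℂ) • v k)
    (horm : ∀ k l : Fin N,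
      ∑ i, (starRingEnd ℂ) (v k i) * v l i = if k = l then 1 else 0)
    (αc : Fin N → Fin n → ℂ)
    (hαc : ∀ (k : Fin N) (i : Fin N),
      v k i = ∑ j, αc k j * (φ j i).eval ((x k : ℂ)))
    :
    IsGenSeq (interpSet (fun k => ((x k : ℂ))) αc) (fun i => fun jj => Q jj i) := by
  set e : Fin n → Fin N := fun i => ⟨degenerateRow m i, hA.degenerateRow_lt i.isLt⟩
  have hq : ∀ i, (fun t => Q t i) = rowResidual A φ (e i) :=
    fun i => funext fun t => hQ t i (e i) (hA.succ_degenerateRow i.isLt)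
  have hα : ∀ k i, v k i = interpFunctional (x k) (αc k) fun t => φ t i := by
    simpa only [interpFunctional_apply] using hαc
  have hφ := hA.degree_interleave_column hn hnN hT_upper hT_diag hφ_init hφ_rec
  have hqdeg : ∀ i, (interleave ℂ n fun t => Q t i).degree = (colHeight n m (e i) + n : ℕ) :=
    fun i => hq i ▸ hA.degree_interleave_rowResidual hn hφ i.isLt rfl
  refine isGenSeq_of_degree_interleave hn hqdeg
    (fun i j hij => Nat.add_le_add_right
      ((colHeight_strictMono hn).monotone (hA.degenerateRow_mono hij j.isLt)) n)
    (fun i j h => hA.colHeight_degenerateRow_mod_injective hn (by simpa using h))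
    (fun i => hq i ▸ mem_interpSet_iff.mpr fun k => interpFunctional_rowResidual (heig k) (hα k) _)
    (fun s hs => ?_)
  obtain ⟨γ, S, rfl⟩ := exists_eq_sum_smul_add_sum_smul hn (fun c t => φ t c) (fun i t => Q t i)
    hφ hqdeg (fun D => (hA.exists_colHeight_eq_or_degenerate hn D).imp
      (fun ⟨c, hc, hD⟩ => ⟨⟨c, hc⟩, hD⟩) id) s
  have hγ : γ = 0 := eq_zero_of_orthonormal horm fun k => by
    simpa [interpFunctional_smul, ← hα, hq, interpFunctional_rowResidual (heig k) (hα k),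
      mul_comm] using mem_interpSet_iff.mp hs k
  exact ⟨S, by simp [hγ]⟩
end

section
/- Let σ and σ̃ be two elements of 𝔐(n,N), determined respectively by data (x_k, α(k)) with jumps σ_k and (x̃_k, α̃(k)) with jumps σ̃_k. If ⟨r,s⟩_{L²(σ)} = ⟨r,s⟩_{L²(σ̃)} for all n-dimensional vector polynomials r and s, then the sets of jump points coincide, {x_1,…,x_N} = {x̃_1,…,x̃_N}, and the jumps coincide: for every t ∈ ℝ, ∑_{k : x_k = t} σ_k = ∑_{k : x̃_k = t} σ̃_k; in particular σ(t) = σ̃(t) for all t ∈ ℝ. -/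
open Polynomial Matrix

private lemma lagrange_eval_self (T : Finset ℂ) (t : ℂ) :
    (∏ s ∈ T.erase t, (Polynomial.C ((t - s)⁻¹) * (Polynomial.X - Polynomial.C s))).eval t = 1 := by
  rw [Polynomial.eval_prod]
  apply Finset.prod_eq_one
  intro s hs
  have hst : s ≠ t := Finset.ne_of_mem_erase hs
  have : t - s ≠ 0 := sub_ne_zero.mpr (Ne.symm hst)
  simp [inv_mul_cancel₀ this]

private lemma lagrange_eval_ne (T : Finset ℂ) (t u : ℂ) (hu : u ∈ T) (hne : u ≠ t) :
    (∏ s ∈ T.erase t, (Polynomial.C ((t - s)⁻¹) * (Polynomial.X - Polynomial.C s))).eval u = 0 := by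
  rw [Polynomial.eval_prod]
  apply Finset.prod_eq_zero (Finset.mem_erase.mpr ⟨hne, hu⟩)
  simp

private lemma sum_eval_lagrange {N : ℕ} (T : Finset ℂ) (y : Fin N → ℝ) (c : Fin N → ℂ)
    (hy : ∀ k, ((y k : ℝ) : ℂ) ∈ T) (t : ℝ) :
    ∑ k, c k * (∏ s ∈ T.erase (t : ℂ),
        (Polynomial.C (((t : ℂ)) - s)⁻¹ * (Polynomial.X - Polynomial.C s))).eval ((y k : ℝ) : ℂ)
      = ∑ k ∈ Finset.univ.filter (fun k => y k = t), c k := by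
  rw [← Finset.sum_filter_add_sum_filter_not Finset.univ (fun k => y k = t)]
  have h1 : ∀ k ∈ Finset.univ.filter (fun k => y k = t),
      c k * (∏ s ∈ T.erase (t : ℂ),
        (Polynomial.C (((t : ℂ)) - s)⁻¹ * (Polynomial.X - Polynomial.C s))).eval ((y k : ℝ) : ℂ) = c k := by
    intro k hk
    have hkt : y k = t := (Finset.mem_filter.mp hk).2
    rw [hkt, lagrange_eval_self T (t : ℂ), mul_one]
  have h2 : ∀ k ∈ Finset.univ.filter (fun k => ¬ y k = t),
      c k * (∏ s ∈ T.erase (t : ℂ),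
        (Polynomial.C (((t : ℂ)) - s)⁻¹ * (Polynomial.X - Polynomial.C s))).eval ((y k : ℝ) : ℂ) = 0 := by
    intro k hk
    have hkt : y k ≠ t := (Finset.mem_filter.mp hk).2
    have : ((y k : ℝ) : ℂ) ≠ (t : ℂ) := by
      simpa [Complex.ofReal_inj] using hkt
    rw [lagrange_eval_ne T (t : ℂ) _ (hy k) this, mul_zero]
  rw [Finset.sum_congr rfl h1, Finset.sum_congr rfl h2, Finset.sum_const_zero, add_zero]

private lemma moment_eq {N : ℕ} (x x' : Fin N → ℝ) (c c' : Fin N → ℂ)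
    (h : ∀ q : Polynomial ℂ, ∑ k, c k * q.eval ((x k : ℝ) : ℂ) = ∑ k, c' k * q.eval ((x' k : ℝ) : ℂ))
    (t : ℝ) :
    ∑ k ∈ Finset.univ.filter (fun k => x k = t), c k
      = ∑ k ∈ Finset.univ.filter (fun k => x' k = t), c' k := by
  classical
  set T : Finset ℂ := (Finset.univ.image fun k => ((x k : ℝ) : ℂ)) ∪
      (Finset.univ.image fun k => ((x' k : ℝ) : ℂ)) with hT
  have hx : ∀ k, ((x k : ℝ) : ℂ) ∈ T := fun k =>
    Finset.mem_union_left _ (Finset.mem_image_of_mem _ (Finset.mem_univ k))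
  have hx' : ∀ k, ((x' k : ℝ) : ℂ) ∈ T := fun k =>
    Finset.mem_union_right _ (Finset.mem_image_of_mem _ (Finset.mem_univ k))
  have := h (∏ s ∈ T.erase (t : ℂ),
      (Polynomial.C (((t : ℂ)) - s)⁻¹ * (Polynomial.X - Polynomial.C s)))
  rw [sum_eval_lagrange T x c hx t, sum_eval_lagrange T x' c' hx' t] at this
  exact this

/-- If two elements of 𝔐(n,N) induce the same inner product on vector polynomials,
then their jump points and jumps coincide. -/
theorem stmt18
    (n N : ℕ) (hn : 0 < n) (hnN : n < N)
    (x : Fin N → ℝ) (α : Fin N → Fin n → ℂ)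
    (hα_ne : ∀ k, α k ≠ 0)
    (hα_col : ∀ j : Fin n, ∃ k, α k j ≠ 0)
    (hα_li : ∀ t : ℝ,
      LinearIndependent ℂ (fun k : {k : Fin N // x k = t} => α k.val))
    (x' : Fin N → ℝ) (α' : Fin N → Fin n → ℂ)
    (hα'_ne : ∀ k, α' k ≠ 0)
    (hα'_col : ∀ j : Fin n, ∃ k, α' k j ≠ 0)
    (hα'_li : ∀ t : ℝ,
      LinearIndependent ℂ (fun k : {k : Fin N // x' k = t} => α' k.val))
    (hsame : ∀ r s : Fin n → Polynomial ℂ,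
      L2inner x (sigmaJump α) r s = L2inner x' (sigmaJump α') r s) :
    (Set.range x = Set.range x') ∧
    (∀ t : ℝ,
      ∑ k ∈ Finset.univ.filter (fun k => x k = t), sigmaJump α k
        = ∑ k ∈ Finset.univ.filter (fun k => x' k = t), sigmaJump α' k) ∧
    (∀ t : ℝ,
      ∑ k ∈ Finset.univ.filter (fun k => x k < t), sigmaJump α k
        = ∑ k ∈ Finset.univ.filter (fun k => x' k < t), sigmaJump α' k) := by
  classical
  have key : ∀ (i j : Fin n) (q : Polynomial ℂ),
      ∑ k, sigmaJump α k i j * q.eval ((x k : ℝ) : ℂ)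
        = ∑ k, sigmaJump α' k i j * q.eval ((x' k : ℝ) : ℂ) := by
    intro i j q
    have h := hsame (fun i' => if i' = i then 1 else 0) (fun j' => if j' = j then q else 0)
    simpa [L2inner, apply_ite, Finset.sum_ite_eq', mul_ite, ite_mul, mul_zero, zero_mul,
      mul_one, one_mul] using h
  have claim2 : ∀ t : ℝ,
      ∑ k ∈ Finset.univ.filter (fun k => x k = t), sigmaJump α k
        = ∑ k ∈ Finset.univ.filter (fun k => x' k = t), sigmaJump α' k := by
    intro t
    ext i j
    rw [Matrix.sum_apply, Matrix.sum_apply]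
    exact moment_eq x x' (fun k => sigmaJump α k i j) (fun k => sigmaJump α' k i j)
      (fun q => key i j q) t
  have traceC : ∀ (β : Fin N → Fin n → ℂ) (F : Finset (Fin N)),
      (∑ i, (∑ k ∈ F, sigmaJump β k) i i)
        = ((∑ k ∈ F, ∑ i, Complex.normSq (β k i) : ℝ) : ℂ) := by
    intro β F
    simp only [Matrix.sum_apply, sigmaJump, Matrix.of_apply,
      ← Complex.normSq_eq_conj_mul_self]
    rw [Finset.sum_comm]
    push_cast
    rfl
  have trace_eq : ∀ t : ℝ,
      (∑ k ∈ Finset.univ.filter (fun k => x k = t), ∑ i, Complex.normSq (α k i))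
        = ∑ k ∈ Finset.univ.filter (fun k => x' k = t), ∑ i, Complex.normSq (α' k i) := by
    intro t
    have h2 := congrArg (fun M : Matrix (Fin n) (Fin n) ℂ => ∑ i, M i i) (claim2 t)
    rw [traceC α _, traceC α' _] at h2
    exact_mod_cast h2
  have main : ∀ (y y' : Fin N → ℝ) (β β' : Fin N → Fin n → ℂ),
      (∀ k, β k ≠ 0) →
      (∀ t, (∑ k ∈ Finset.univ.filter (fun k => y k = t), ∑ i, Complex.normSq (β k i))
        = ∑ k ∈ Finset.univ.filter (fun k => y' k = t), ∑ i, Complex.normSq (β' k i)) →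
      Set.range y ⊆ Set.range y' := by
    intro y y' β β' hβ htr t ht
    obtain ⟨k0, hk0⟩ := ht
    have hpos : 0 < ∑ k ∈ Finset.univ.filter (fun k => y k = t), ∑ i, Complex.normSq (β k i) := by
      apply Finset.sum_pos'
      · exact fun k _ => Finset.sum_nonneg fun i _ => Complex.normSq_nonneg _
      · refine ⟨k0, Finset.mem_filter.mpr ⟨Finset.mem_univ _, hk0⟩, ?_⟩
        obtain ⟨i0, hi0⟩ : ∃ i, β k0 i ≠ 0 := by
          by_contra hcon
          push_neg at hcon
          exact hβ k0 (funext hcon)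
        exact Finset.sum_pos' (fun i _ => Complex.normSq_nonneg _)
          ⟨i0, Finset.mem_univ _, Complex.normSq_pos.mpr hi0⟩
    rw [htr t] at hpos
    by_contra hcon
    have hemp : Finset.univ.filter (fun k => y' k = t) = ∅ := by
      apply Finset.filter_eq_empty_iff.mpr
      intro k _
      exact fun h => hcon ⟨k, h⟩
    rw [hemp, Finset.sum_empty] at hpos
    exact lt_irrefl 0 hpos
  have claim1 : Set.range x = Set.range x' :=
    Set.Subset.antisymm (main x x' α α' hα_ne trace_eq)
      (main x' x α' α hα'_ne (fun t => (trace_eq t).symm))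
  refine ⟨claim1, claim2, ?_⟩
  intro t
  set S : Finset ℝ := (Finset.univ.image x) ∪ (Finset.univ.image x') with hS
  have hgx : ∀ k, x k ∈ S := fun k =>
    Finset.mem_union_left _ (Finset.mem_image_of_mem _ (Finset.mem_univ k))
  have hgx' : ∀ k, x' k ∈ S := fun k =>
    Finset.mem_union_right _ (Finset.mem_image_of_mem _ (Finset.mem_univ k))
  have grp : ∀ (y : Fin N → ℝ) (σ : Fin N → Matrix (Fin n) (Fin n) ℂ), (∀ k, y k ∈ S) →
      ∑ k ∈ Finset.univ.filter (fun k => y k < t), σ k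
        = ∑ u ∈ S.filter (fun u => u < t), ∑ k ∈ Finset.univ.filter (fun k => y k = u), σ k := by
    intro y σ hy
    rw [← Finset.sum_fiberwise_of_maps_to (t := S.filter (fun u => u < t)) (g := y)
      (fun k hk => Finset.mem_filter.mpr ⟨hy k, (Finset.mem_filter.mp hk).2⟩) σ]
    apply Finset.sum_congr rfl
    intro u hu
    have hut : u < t := (Finset.mem_filter.mp hu).2
    congr 1
    ext k
    simp only [Finset.mem_filter, Finset.mem_univ, true_and]
    constructor
    · rintro ⟨_, h⟩; exact h
    · intro h; exact ⟨h ▸ hut, h⟩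
  rw [grp x (sigmaJump α) hgx, grp x' (sigmaJump α') hgx']
  exact Finset.sum_congr rfl (fun u _ => claim2 u)
end
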